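/- Fix a system of positive coset-depending weights w. The coset weighted pure potential subspace 𝒫^{cw}, i.e. the set of games c for which there exists P : S → ℝ with c_i(s) = w_i(s_{-i})·(P(s) − (1/k_i)·Σ_{x∈S_i} P(x, s_{-i})) for all i and s, is a linear subspace of 𝒢 of dimension k − 1, where k = Π_{i=1}^n k_i. -/
import Mathlib


/-- `f : S → ℝ` depends only on the strategies of the players other than `i`
(i.e. it is a function of `s_{-i}`). -/
def IndepOf {n : ℕ} {k : Fin n → ℕ} (i : Fin n) (f : (∀ j, Fin (k j)) → ℝ) : Prop :=
  ∀ (s : ∀ j, Fin (k j)) (x : Fin (k i)), f (Function.update s i x) = f s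

/-- `P` is a coset weighted potential function for the game `c` with respect to the
coset-depending weights `w`. -/
def IsCWPotentialFn {n : ℕ} {k : Fin n → ℕ} (c w : Fin n → (∀ j, Fin (k j)) → ℝ)
    (P : (∀ j, Fin (k j)) → ℝ) : Prop :=
  ∀ (i : Fin n) (s : ∀ j, Fin (k j)) (x y : Fin (k i)),
    c i (Function.update s i x) - c i (Function.update s i y)
      = w i s * (P (Function.update s i x) - P (Function.update s i y))

/-- `c` is a coset weighted potential game with respect to `w`. -/
def IsCWPG {n : ℕ} {k : Fin n → ℕ} (w c : Fin n → (∀ j, Fin (k j)) → ℝ) : Prop :=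
  ∃ P, IsCWPotentialFn c w P

/-- `c` is a coset weighted pure potential game w.r.t. `w`:
`c_i(s) = w_i(s_{-i}) (P(s) − (1/k_i) Σ_{x ∈ S_i} P(x, s_{-i}))` for some `P`. -/
def IsCWPurePotential {n : ℕ} {k : Fin n → ℕ}
    (w c : Fin n → (∀ j, Fin (k j)) → ℝ) : Prop :=
  ∃ P : (∀ j, Fin (k j)) → ℝ, ∀ (i : Fin n) (s : ∀ j, Fin (k j)),
    c i s = w i s * (P s - (1 / (k i : ℝ)) * ∑ x : Fin (k i), P (Function.update s i x))

/-- `c` is a non-strategic game. -/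
def IsNonStrategic {n : ℕ} {k : Fin n → ℕ} (c : Fin n → (∀ j, Fin (k j)) → ℝ) : Prop :=
  ∀ (i : Fin n) (s : ∀ j, Fin (k j)) (x y : Fin (k i)),
    c i (Function.update s i x) = c i (Function.update s i y)

/-- The inner product `⟨c, c'⟩ = Σ_i Σ_s c_i(s) c'_i(s)` on the space of games. -/
noncomputable def gameInner {n : ℕ} {k : Fin n → ℕ}
    (c c' : Fin n → (∀ j, Fin (k j)) → ℝ) : ℝ :=
  ∑ i : Fin n, ∑ s : ∀ j, Fin (k j), c i s * c' i s

/-- `c` is a coset weighted pure harmonic game w.r.t. `w`: it is orthogonal to every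
coset weighted potential game w.r.t. `w`. -/
def IsCWPureHarmonic {n : ℕ} {k : Fin n → ℕ}
    (w c : Fin n → (∀ j, Fin (k j)) → ℝ) : Prop :=
  ∀ c' : Fin n → (∀ j, Fin (k j)) → ℝ, IsCWPG w c' → gameInner c c' = 0


/-- The linear map sending a potential function `P` to the pure potential game it induces. -/
noncomputable def Tmap {n : ℕ} {k : Fin n → ℕ} (w : Fin n → (∀ j, Fin (k j)) → ℝ) :
    ((∀ j, Fin (k j)) → ℝ) →ₗ[ℝ] (Fin n → (∀ j, Fin (k j)) → ℝ) where
  toFun P := fun i s =>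
    w i s * (P s - (1 / (k i : ℝ)) * ∑ x : Fin (k i), P (Function.update s i x))
  map_add' P Q := by
    funext i s
    simp only [Pi.add_apply, Finset.sum_add_distrib]
    ring
  map_smul' a P := by
    funext i s
    simp only [Pi.smul_apply, smul_eq_mul, RingHom.id_apply, ← Finset.mul_sum]
    ring

/-- A function satisfying the mean-value property in every coordinate is constant. -/
lemma const_of_mean {n : ℕ} {k : Fin n → ℕ} (hk : ∀ i, 2 ≤ k i)
    (P : (∀ j, Fin (k j)) → ℝ)
    (hP : ∀ (i : Fin n) (s : ∀ j, Fin (k j)),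
      (k i : ℝ) * P s = ∑ x : Fin (k i), P (Function.update s i x)) :
    ∀ s t, P s = P t := by
  have hne : ∀ j, 0 < k j := fun j => lt_of_lt_of_le two_pos (hk j)
  have : ∀ j, Nonempty (Fin (k j)) := fun j => ⟨⟨0, hne j⟩⟩
  obtain ⟨s0, hs0⟩ := Finite.exists_max P
  -- at a maximum point, all one-coordinate updates achieve the maximum
  have step : ∀ s, P s = P s0 → ∀ (i : Fin n) (x : Fin (k i)),
      P (Function.update s i x) = P s0 := by
    intro s hs i x
    by_contra hxne
    have hlt : P (Function.update s i x) < P s0 := lt_of_le_of_ne (hs0 _) hxne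
    have hsum : ∑ y : Fin (k i), P (Function.update s i y) < ∑ _y : Fin (k i), P s0 := by
      apply Finset.sum_lt_sum (fun y _ => hs0 _) ⟨x, Finset.mem_univ x, hlt⟩
    rw [← hP i s, hs, Finset.sum_const, Finset.card_univ, Fintype.card_fin,
      nsmul_eq_mul] at hsum
    exact lt_irrefl _ hsum
  have key : ∀ m (s : ∀ j, Fin (k j)),
      (Finset.univ.filter fun j => s j ≠ s0 j).card ≤ m → P s = P s0 := by
    intro m
    induction m with
    | zero =>
      intro s hcard
      have : ∀ j, s j = s0 j := by
        intro j
        by_contra hj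
        have : j ∈ Finset.univ.filter fun j => s j ≠ s0 j := by simp [hj]
        have := Finset.card_pos.mpr ⟨j, this⟩
        omega
      rw [funext this]
    | succ m ih =>
      intro s hcard
      by_cases hs : ∀ j, s j = s0 j
      · rw [funext hs]
      · push_neg at hs
        obtain ⟨j, hj⟩ := hs
        set t := Function.update s j (s0 j) with ht
        have hsub : (Finset.univ.filter fun i => t i ≠ s0 i) ⊆
            (Finset.univ.filter fun i => s i ≠ s0 i).erase j := by
          intro i hi
          simp only [Finset.mem_filter, Finset.mem_univ, true_and] at hi
          by_cases hij : i = j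
          · exfalso; subst hij; apply hi; simp [ht]
          · simp only [Finset.mem_erase, Finset.mem_filter, Finset.mem_univ, true_and]
            refine ⟨hij, ?_⟩
            rwa [ht, Function.update_of_ne hij] at hi
        have hjmem : j ∈ Finset.univ.filter fun i => s i ≠ s0 i := by simp [hj]
        have hcard' : (Finset.univ.filter fun i => t i ≠ s0 i).card ≤ m := by
          have := Finset.card_le_card hsub
          have := Finset.card_erase_of_mem hjmem
          omega
        have hPt : P t = P s0 := ih t hcard'
        have := step t hPt j (s j)
        rwa [ht, Function.update_idem, Function.update_eq_self] at this
  intro s t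
  rw [key _ s le_rfl, key _ t le_rfl]

/-- **Dimension claim** -/
theorem pure_potential_subspace_dim (n : ℕ) (hn : 2 ≤ n) (k : Fin n → ℕ)
    (hk : ∀ i, 2 ≤ k i) (w : Fin n → (∀ j, Fin (k j)) → ℝ)
    (hw : ∀ i s, 0 < w i s) (hwI : ∀ i, IndepOf i (w i)) :
    ∃ V : Submodule ℝ (Fin n → (∀ j, Fin (k j)) → ℝ),
      (∀ c, c ∈ V ↔ IsCWPurePotential w c) ∧
      Module.finrank ℝ V = (∏ i, k i) - 1 := by
  classical
  have hne : ∀ j, 0 < k j := fun j => lt_of_lt_of_le two_pos (hk j)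
  have : ∀ j, Nonempty (Fin (k j)) := fun j => ⟨⟨0, hne j⟩⟩
  refine ⟨LinearMap.range (Tmap w), ?_, ?_⟩
  · intro c
    constructor
    · rintro ⟨P, rfl⟩
      exact ⟨P, fun i s => rfl⟩
    · rintro ⟨P, hP⟩
      exact ⟨P, by funext i s; exact (hP i s).symm⟩
  · have hker : LinearMap.ker (Tmap w) = Submodule.span ℝ {fun _ => (1 : ℝ)} := by
      apply le_antisymm
      · intro P hP
        simp only [LinearMap.mem_ker] at hP
        have hmean : ∀ (i : Fin n) (s : ∀ j, Fin (k j)),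
            (k i : ℝ) * P s = ∑ x : Fin (k i), P (Function.update s i x) := by
          intro i s
          have h1 : Tmap w P i s = 0 := by rw [hP]; rfl
          have h2 : P s - (1 / (k i : ℝ)) * ∑ x : Fin (k i), P (Function.update s i x) = 0 := by
            rcases mul_eq_zero.mp h1 with h | h
            · exact absurd h (ne_of_gt (hw i s))
            · exact h
          have hki : (k i : ℝ) ≠ 0 := Nat.cast_ne_zero.mpr (hne i).ne'
          field_simp at h2
          linarith [h2]
        have hconst := const_of_mean hk P hmean
        obtain ⟨s0⟩ : Nonempty (∀ j, Fin (k j)) := ⟨fun j => ⟨0, hne j⟩⟩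
        have : P = (P s0) • (fun _ => (1 : ℝ)) := by
          funext s; simp [hconst s s0]
        rw [this]
        exact Submodule.smul_mem _ _ (Submodule.subset_span rfl)
      · rw [Submodule.span_le]
        rintro _ rfl
        simp only [SetLike.mem_coe, LinearMap.mem_ker]
        funext i s
        show w i s * ((1 : ℝ) - (1 / (k i : ℝ)) * ∑ _x : Fin (k i), (1 : ℝ)) = 0
        have hki : (k i : ℝ) ≠ 0 := Nat.cast_ne_zero.mpr (hne i).ne'
        rw [Finset.sum_const, Finset.card_univ, Fintype.card_fin, nsmul_eq_mul, mul_one,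
          one_div, inv_mul_cancel₀ hki, sub_self, mul_zero]
    have hone : (fun _ => (1 : ℝ) : (∀ j, Fin (k j)) → ℝ) ≠ 0 := by
      obtain ⟨s0⟩ : Nonempty (∀ j, Fin (k j)) := ⟨fun j => ⟨0, hne j⟩⟩
      intro h
      have := congrFun h s0
      simp at this
    have hkerdim : Module.finrank ℝ (LinearMap.ker (Tmap w)) = 1 := by
      rw [hker]; exact finrank_span_singleton hone
    have hdom : Module.finrank ℝ ((∀ j, Fin (k j)) → ℝ) = ∏ i, k i := by
      rw [Module.finrank_pi ℝ]
      simp [Fintype.card_pi]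
    have hsum := LinearMap.finrank_range_add_finrank_ker (Tmap w)
    rw [hkerdim, hdom] at hsum
    exact Nat.eq_sub_of_add_eq hsum
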